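/- arXiv:1901.02239 — 2 statements merged into one kernel-verified Lean document; each statement's English description precedes it below -/
import Mathlib

section
/- Let T ⊂ ℝⁿ be a compact C² submanifold (without boundary). Then the infimum of the lengths |q − q'| over all pairs of distinct points q, q' ∈ T such that the segment from q to q' is orthogonal to T at both endpoints (i.e. q' − q ⊥ T_qT and q' − q ⊥ T_{q'}T) is strictly positive. -/
/-!
Near `q₀ ∈ T` write `T` as the zero set of a submersion `f`; the adjoint of `A₀ = Df(q₀)` is
bounded below, `c‖y‖ ≤ ‖A₀† y‖` with `c > 0`. A chord `w = q' - q` normal to `T` at `q` is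
orthogonal to `ker Df(q)`, so `w = Df(q)† y`. On a ball where `Df` stays `c/4`-close to `A₀`, the
mean value inequality and `f q = f q' = 0` give `‖Df(q) w‖ ≤ (c/2)‖w‖`, while `‖w‖² = ⟪Df(q) w, y⟫`
and `(3c/4)‖y‖ ≤ ‖w‖`; hence `w = 0`. Thus normal chords are trivial locally, and a Lebesgue number
of the resulting cover of the compact `T` bounds the length of every nontrivial normal chord.
-/

noncomputable section

open Function

/-- A vector `v` is tangent to `T ⊆ E` at `q` if it is the velocity at `0` of a
differentiable curve in `T` through `q`. -/
def TangentAt {E : Type*} [NormedAddCommGroup E] [NormedSpace ℝ E]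
    (T : Set E) (q v : E) : Prop :=
  ∃ c : ℝ → E, (∀ t, c t ∈ T) ∧ c 0 = q ∧ HasDerivAt c v 0

/-- `T` is a C² submanifold of `ℝⁿ` (without boundary): near each of its points it is the
zero set of a C² submersion into some `ℝᵐ`. -/
def IsC2Submanifold {n : ℕ} (T : Set (EuclideanSpace ℝ (Fin n))) : Prop :=
  ∀ q ∈ T, ∃ (m : ℕ) (U : Set (EuclideanSpace ℝ (Fin n)))
    (f : EuclideanSpace ℝ (Fin n) → EuclideanSpace ℝ (Fin m)),
      IsOpen U ∧ q ∈ U ∧ ContDiff ℝ 2 f ∧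
      T ∩ U = {x ∈ U | f x = 0} ∧
      ∀ x ∈ U, Surjective (fderiv ℝ f x)

open Filter Metric Topology
open scoped InnerProductSpace

theorem IsCompact.exists_pos_le_dist_of_locally_trivial {α : Type*} [PseudoMetricSpace α]
    {s : Set α} (hs : IsCompact s) {R : α → α → Prop}
    (hR : ∀ x ∈ s, ∃ r > 0, ∀ a ∈ s, ∀ b ∈ s, a ∈ ball x r → b ∈ ball x r → R a b → a = b) :
    ∃ ε > 0, ∀ a ∈ s, ∀ b ∈ s, R a b → a ≠ b → ε ≤ dist a b := by
  choose r hr_pos hr using hR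
  obtain ⟨δ, hδ, hδr⟩ := lebesgue_number_lemma_of_metric hs
    (c := fun x : s ↦ ball (x : α) (r x x.2)) (fun _ ↦ isOpen_ball)
    (fun x hx ↦ Set.mem_iUnion.2 ⟨⟨x, hx⟩, mem_ball_self (hr_pos x hx)⟩)
  refine ⟨δ, hδ, fun a ha b hb hab hne ↦ not_lt.1 fun hlt ↦ hne ?_⟩
  obtain ⟨⟨x, hx⟩, hball⟩ := hδr a ha
  exact hr x hx a ha b hb (hball (mem_ball_self hδ)) (hball (mem_ball'.2 hlt)) hab

theorem tangentAt_of_eventually_mem {E : Type*} [NormedAddCommGroup E] [NormedSpace ℝ E]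
    {T : Set E} {c : ℝ → E} {q v : E} (hc : HasDerivAt c v 0) (hc₀ : c 0 = q)
    (hT : ∀ᶠ t in 𝓝 0, c t ∈ T) : TangentAt T q v := by
  have hq : q ∈ T := hc₀ ▸ hT.self_of_nhds
  classical
  refine ⟨fun t ↦ if c t ∈ T then c t else q, fun t ↦ ?_, by simp [hc₀], ?_⟩
  · by_cases h : c t ∈ T <;> simp [h, hq]
  · exact hc.congr_of_eventuallyEq (hT.mono fun t ht ↦ if_pos ht)

/-- The implicit function theorem parametrises the level set of `f` through `q` by `ker f'`,
so every kernel vector is the velocity of a curve in that level set. -/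
theorem tangentAt_of_mem_ker {E F : Type*} [NormedAddCommGroup E] [NormedSpace ℝ E]
    [CompleteSpace E] [NormedAddCommGroup F] [NormedSpace ℝ F] [FiniteDimensional ℝ F]
    {T : Set E} {f : E → F} {f' : E →L[ℝ] F} {q v : E} (hf : HasStrictFDerivAt f f' q)
    (hf' : f'.range = ⊤) (hT : ∀ᶠ x in 𝓝 q, f x = f q → x ∈ T) (hv : v ∈ f'.ker) :
    TangentAt T q v := by
  set g := hf.implicitFunction f f' hf'
  let v' : f'.ker := ⟨v, hv⟩
  have hsmul : Tendsto (fun t : ℝ ↦ t • v') (𝓝 0) (𝓝 0) := by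
    simpa using (tendsto_id (x := 𝓝 (0 : ℝ))).smul_const v'
  refine tangentAt_of_eventually_mem (c := fun t ↦ g (f q) (t • v')) ?_ (by simp [g]) ?_
  · have hg : HasFDerivAt (g (f q)) f'.ker.subtypeL ((0 : ℝ) • v') := by
      simpa using (hf.to_implicitFunction hf').hasFDerivAt
    simpa [v', comp_def] using
      hg.comp_hasDerivAt (0 : ℝ) ((hasDerivAt_id (0 : ℝ)).smul_const v')
  · have hg_tendsto : Tendsto (fun t : ℝ ↦ g (f q) (t • v')) (𝓝 0) (𝓝 q) :=
      hf.tendsto_implicitFunction hf' tendsto_const_nhds hsmul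
    filter_upwards [(tendsto_const_nhds.prodMk_nhds hsmul).eventually
      (hf.map_implicitFunction_eq hf'), hg_tendsto.eventually hT] with t hft hT'
    exact hT' hft

section Adjoint

variable {E F : Type*} [NormedAddCommGroup E] [InnerProductSpace ℝ E] [CompleteSpace E]
  [NormedAddCommGroup F] [InnerProductSpace ℝ F] [CompleteSpace F]

theorem ContinuousLinearMap.exists_pos_mul_norm_le_norm_adjoint [FiniteDimensional ℝ F]
    {A : E →L[ℝ] F} (hA : Surjective A) : ∃ c > 0, ∀ y, c * ‖y‖ ≤ ‖A.adjoint y‖ := by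
  have hker : A.adjoint.ker = ⊥ := by
    rw [← A.orthogonal_range, LinearMap.range_eq_top.2 hA, Submodule.top_orthogonal_eq_bot]
  obtain ⟨K, hK, hanti⟩ := LinearMap.exists_antilipschitzWith A.adjoint.toLinearMap hker
  refine ⟨(K : ℝ)⁻¹, by positivity, fun y ↦ ?_⟩
  rw [inv_mul_le_iff₀ (by exact_mod_cast hK)]
  simpa using hanti.le_mul_dist y 0

theorem ContinuousLinearMap.mul_norm_le_norm_adjoint_of_norm_sub_le {A A₀ : E →L[ℝ] F}
    {c δ : ℝ} (hc : ∀ y, c * ‖y‖ ≤ ‖A₀.adjoint y‖) (hδ : ‖A - A₀‖ ≤ δ) (y : F) :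
    (c - δ) * ‖y‖ ≤ ‖A.adjoint y‖ := by
  have hdiff : ‖A₀.adjoint y - A.adjoint y‖ ≤ δ * ‖y‖ := calc
    ‖A₀.adjoint y - A.adjoint y‖ = ‖(A - A₀).adjoint y‖ := by rw [map_sub, norm_sub_rev]; rfl
    _ ≤ ‖A - A₀‖ * ‖y‖ := by
      simpa only [LinearIsometryEquiv.norm_map] using (A - A₀).adjoint.le_opNorm y
    _ ≤ δ * ‖y‖ := by gcongr
  linarith [hc y, norm_sub_norm_le (A₀.adjoint y) (A.adjoint y)]

theorem ContinuousLinearMap.adjoint_apply_eq_zero_of_norm_apply_le {A : E →L[ℝ] F} {y : F}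
    {c ε : ℝ} (hc : c * ‖y‖ ≤ ‖A.adjoint y‖) (hε : ‖A (A.adjoint y)‖ ≤ ε * ‖A.adjoint y‖)
    (hεc : ε < c) : A.adjoint y = 0 := by
  have hw : ‖A.adjoint y‖ ^ 2 ≤ ε * ‖A.adjoint y‖ * ‖y‖ := calc
    ‖A.adjoint y‖ ^ 2 = ⟪A (A.adjoint y), y⟫_ℝ := by
      rw [← real_inner_self_eq_norm_sq, A.adjoint_inner_right]
    _ ≤ ‖A (A.adjoint y)‖ * ‖y‖ := real_inner_le_norm _ _
    _ ≤ ε * ‖A.adjoint y‖ * ‖y‖ := by gcongr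
  by_contra hne
  have hpos : 0 < ‖A.adjoint y‖ := norm_pos_iff.2 hne
  have hle : ‖A.adjoint y‖ ≤ ε * ‖y‖ := by nlinarith
  have hy : ‖y‖ = 0 := by nlinarith [norm_nonneg y]
  rw [hy, mul_zero] at hle
  linarith

end Adjoint

theorem Convex.norm_apply_sub_le_of_eq {E F : Type*} [NormedAddCommGroup E]
    [NormedSpace ℝ E] [NormedAddCommGroup F] [NormedSpace ℝ F] {f : E → F} {φ : E →L[ℝ] F}
    {s : Set E} {x y : E} {C : ℝ} (hs : Convex ℝ s) (hf : ∀ z ∈ s, DifferentiableAt ℝ f z)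
    (bound : ∀ z ∈ s, ‖fderiv ℝ f z - φ‖ ≤ C) (hx : x ∈ s) (hy : y ∈ s) (hxy : f x = f y) :
    ‖φ (y - x)‖ ≤ C * ‖y - x‖ := by
  simpa only [hxy, sub_self, zero_sub, norm_neg] using
    hs.norm_image_sub_le_of_norm_fderiv_le' hf bound hx hy

def IsNormalAt {E : Type*} [NormedAddCommGroup E] [InnerProductSpace ℝ E] (T : Set E)
    (q w : E) : Prop :=
  ∀ v, TangentAt T q v → ⟪w, v⟫_ℝ = 0

theorem exists_ball_eq_of_isNormalAt_sub {E F : Type*} [NormedAddCommGroup E]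
    [InnerProductSpace ℝ E] [FiniteDimensional ℝ E] [NormedAddCommGroup F]
    [InnerProductSpace ℝ F] [FiniteDimensional ℝ F] {T U : Set E} {f : E → F} {q₀ : E}
    (hf : ContDiff ℝ 1 f) (hU : IsOpen U) (hq₀ : q₀ ∈ U) (hTU : T ∩ U = {x ∈ U | f x = 0})
    (hsurj : ∀ x ∈ U, Surjective (fderiv ℝ f x)) :
    ∃ r > 0, ∀ q ∈ T, ∀ q' ∈ T, q ∈ ball q₀ r → q' ∈ ball q₀ r →
      IsNormalAt T q (q' - q) → q = q' := by
  have hmem : ∀ x ∈ U, x ∈ T ↔ f x = 0 := fun x hx ↦ by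
    simpa [hx] using congrArg (x ∈ ·) hTU
  set A₀ := fderiv ℝ f q₀
  obtain ⟨c, hc_pos, hc⟩ := A₀.exists_pos_mul_norm_le_norm_adjoint (hsurj q₀ hq₀)
  obtain ⟨r₁, hr₁, hr₁A₀⟩ := continuousAt_iff.1
    (hf.continuous_fderiv one_ne_zero).continuousAt (c / 4) (by positivity)
  obtain ⟨r₂, hr₂, hr₂U⟩ := isOpen_iff.1 hU q₀ hq₀
  refine ⟨min r₁ r₂, lt_min hr₁ hr₂, fun q hq q' hq' hqr hq'r hnormal ↦ ?_⟩
  have hU' : ball q₀ (min r₁ r₂) ⊆ U := (ball_subset_ball (min_le_right _ _)).trans hr₂U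
  have hclose : ∀ x ∈ ball q₀ (min r₁ r₂), ‖fderiv ℝ f x - A₀‖ < c / 4 := fun x hx ↦ by
    simpa [dist_eq_norm] using hr₁A₀ (lt_of_lt_of_le (mem_ball.1 hx) (min_le_left _ _))
  have hfq : f q = 0 := (hmem q (hU' hqr)).1 hq
  have hfq' : f q' = 0 := (hmem q' (hU' hq'r)).1 hq'
  set A := fderiv ℝ f q
  have hker : q' - q ∈ A.kerᗮ := by
    refine (Submodule.mem_orthogonal' _ _).2 fun v hv ↦ hnormal v ?_
    refine tangentAt_of_mem_ker (hf.contDiffAt.hasStrictFDerivAt one_ne_zero)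
      (LinearMap.range_eq_top.2 (hsurj q (hU' hqr))) ?_ hv
    filter_upwards [hU.mem_nhds (hU' hqr)] with x hx hfx
    exact (hmem x hx).2 (hfx.trans hfq)
  rw [A.orthogonal_ker, Submodule.closed_of_finiteDimensional _ |>.submodule_topologicalClosure_eq]
    at hker
  obtain ⟨y, hy⟩ := hker
  have hAw : ‖A (q' - q)‖ ≤ c / 2 * ‖q' - q‖ := by
    have hbound : ∀ x ∈ ball q₀ (min r₁ r₂), ‖fderiv ℝ f x - A‖ ≤ c / 2 := fun x hx ↦ by
      have := norm_sub_le_norm_sub_add_norm_sub (fderiv ℝ f x) A₀ A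
      rw [norm_sub_rev A₀] at this
      linarith [hclose x hx, hclose q hqr]
    exact (convex_ball q₀ _).norm_apply_sub_le_of_eq
      (fun x _ ↦ hf.differentiable one_ne_zero x) hbound hqr hq'r (hfq.trans hfq'.symm)
  have hlow := A.mul_norm_le_norm_adjoint_of_norm_sub_le hc (hclose q hqr).le y
  have hy0 := A.adjoint_apply_eq_zero_of_norm_apply_le hlow (by rwa [← hy] at hAw) (by linarith)
  exact (sub_eq_zero.1 (hy.symm.trans hy0)).symm

/-- Let `T ⊂ ℝⁿ` be a compact C² submanifold.  Then the infimum of the lengths `|q' − q|`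
over all pairs of distinct points `q, q' ∈ T` such that the segment from `q` to `q'` is
orthogonal to `T` at both endpoints is strictly positive. -/
theorem stmt_15 (n : ℕ) (T : Set (EuclideanSpace ℝ (Fin n)))
    (hTcpt : IsCompact T) (hTsub : IsC2Submanifold T) :
    ∃ ε : ℝ, 0 < ε ∧ ∀ q ∈ T, ∀ q' ∈ T, q ≠ q' →
      (∀ v, TangentAt T q v → (inner ℝ (q' - q) v : ℝ) = 0) →
      (∀ v, TangentAt T q' v → (inner ℝ (q' - q) v : ℝ) = 0) →
      ε ≤ ‖q' - q‖ := by
  obtain ⟨ε, hε, hsep⟩ := hTcpt.exists_pos_le_dist_of_locally_trivial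
    (R := fun q q' ↦ IsNormalAt T q (q' - q)) fun q₀ hq₀ ↦ by
      obtain ⟨m, U, f, hU, hq₀U, hf, hTU, hsurj⟩ := hTsub q₀ hq₀
      exact exists_ball_eq_of_isNormalAt_sub (hf.of_le one_le_two) hU hq₀U hTU hsurj
  refine ⟨ε, hε, fun q hq q' hq' hne hnormal _ ↦ ?_⟩
  simpa [dist_eq_norm'] using hsep q hq q' hq' hnormal hne
end
end

section
/- Let U ⊂ ℂ be a bounded open connected set, b₁, b₂ : U → ℝ continuous and bounded, and a : closure(U) → ℝ continuous on the closure and C² on U satisfying the elliptic equation Δa = b₁·∂a/∂x + b₂·∂a/∂y on U. Then a attains its maximum over closure(U) on the boundary ∂U: max_{closure(U)} a = max_{∂U} a. -/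
/-!
Perturb `a` by `ε · exp (α · Re z)` with `α` larger than `sup b₁`. At an interior maximum of
the perturbed function its gradient vanishes and its second directional derivatives are
nonpositive, while the equation makes `Δ - b₁ ∂ₓ - b₂ ∂_y` of it equal to
`ε α (α - b₁) exp (α · Re z) > 0`. So the perturbed function attains its maximum over the compact
set `closure U` on `frontier U`, and letting `ε → 0` gives the claim.
-/

open Filter Set Topology

theorem IsLocalMax.deriv_deriv_nonpos {f : ℝ → ℝ} {x : ℝ} (h : IsLocalMax f x)
    (hc : ContinuousAt f x) : deriv (deriv f) x ≤ 0 := by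
  by_contra! hpos
  -- Otherwise the second derivative test makes `x` also a local minimum, so `f` is locally constant.
  have hmin : IsLocalMin f x := isLocalMin_of_deriv_deriv_pos hpos h.deriv_eq_zero hc
  have hconst : f =ᶠ[𝓝 x] fun _ => f x := by
    filter_upwards [h, hmin] with y hmax hmin using le_antisymm hmax hmin
  have hzero : deriv (deriv f) x = 0 := by
    rw [hconst.deriv.deriv_eq]
    simp
  exact hpos.ne' hzero

theorem IsLocalMax.second_deriv_apply_nonpos {E : Type*} [NormedAddCommGroup E]
    [NormedSpace ℝ E] {f : E → ℝ} {f' : E → E →L[ℝ] ℝ} {f'' : E →L[ℝ] ℝ} {x : E} (v : E)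
    (h : IsLocalMax f x) (hf : ∀ᶠ w in 𝓝 x, HasFDerivAt f (f' w) w)
    (hf' : HasFDerivAt (fun w => f' w v) f'' x) : f'' v ≤ 0 := by
  set line : ℝ → E := fun t => x + t • v
  have hline : ∀ t, HasDerivAt line v t := fun t => by
    simpa only [one_smul] using ((hasDerivAt_id' t).smul_const v).const_add x
  have hline0 : line 0 = x := by simp [line]
  have htendsto : Tendsto line (𝓝 0) (𝓝 x) := hline0 ▸ (hline 0).continuousAt.tendsto
  have hderiv : ∀ᶠ t in 𝓝 0, HasDerivAt (f ∘ line) (f' (line t) v) t :=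
    (htendsto.eventually hf).mono fun t ht => ht.comp_hasDerivAt t (hline t)
  have hderiv2 : HasDerivAt (deriv (f ∘ line)) (f'' v) 0 :=
    (hf'.comp_hasDerivAt_of_eq 0 (hline 0) hline0.symm).congr_of_eventuallyEq
      (hderiv.mono fun t ht => ht.deriv)
  have hmax : IsLocalMax (f ∘ line) 0 :=
    IsLocalMax.comp_continuous (by rwa [hline0]) (hline 0).continuousAt
  exact hderiv2.deriv ▸ hmax.deriv_deriv_nonpos hderiv.self_of_nhds.continuousAt

theorem exists_mem_frontier_isMaxOn_closure {X β : Type*} [TopologicalSpace X] [LinearOrder β]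
    [TopologicalSpace β] [ClosedIciTopology β] {U : Set X} {φ : X → β} (hU : IsOpen U)
    (hK : IsCompact (closure U)) (hne : (closure U).Nonempty) (hφ : ContinuousOn φ (closure U))
    (hloc : ∀ z ∈ U, ¬ IsLocalMax φ z) : ∃ z ∈ frontier U, IsMaxOn φ (closure U) z := by
  obtain ⟨z, hz, hmax⟩ := hK.exists_isMaxOn hne hφ
  refine ⟨z, hU.frontier_eq ▸ ⟨hz, fun hzU => hloc z hzU ?_⟩, hmax⟩
  exact hmax.isLocalMax (mem_of_superset (hU.mem_nhds hzU) subset_closure)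

theorem not_isLocalMax_add_mul_exp_re {a : ℂ → ℝ} {z : ℂ} {β₁ β₂ α ε : ℝ}
    (ha : ∀ᶠ w in 𝓝 z, DifferentiableAt ℝ a w) (ha' : DifferentiableAt ℝ (fderiv ℝ a) z)
    (heq : fderiv ℝ (fun w => fderiv ℝ a w 1) z 1 +
        fderiv ℝ (fun w => fderiv ℝ a w Complex.I) z Complex.I
      = β₁ * fderiv ℝ a z 1 + β₂ * fderiv ℝ a z Complex.I)
    (hα : 0 < α) (hβ₁ : β₁ < α) (hε : 0 < ε) :
    ¬ IsLocalMax (fun w => a w + ε * Real.exp (α * w.re)) z := by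
  intro hmax
  set ℓ : ℂ →L[ℝ] ℝ := α • Complex.reCLM
  have he : ∀ w, HasFDerivAt (fun w => Real.exp (ℓ w)) (Real.exp (ℓ w) • ℓ) w :=
    fun w => ℓ.hasFDerivAt.exp
  set ψ' : ℂ → ℂ →L[ℝ] ℝ := fun w => fderiv ℝ a w + ε • Real.exp (ℓ w) • ℓ
  have hψ : ∀ᶠ w in 𝓝 z, HasFDerivAt (fun w => a w + ε * Real.exp (α * w.re)) (ψ' w) w :=
    ha.mono fun w hw => hw.hasFDerivAt.add ((he w).const_mul ε)
  have hψ' : ∀ v, HasFDerivAt (fun w => ψ' w v)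
      (fderiv ℝ (fun w => fderiv ℝ a w v) z + ε • ℓ v • Real.exp (ℓ z) • ℓ) z := fun v =>
    (ha'.clm_apply (differentiableAt_const v)).hasFDerivAt.add
      (((he z).mul_const (ℓ v)).const_mul ε)
  have hgrad : ψ' z = 0 := hψ.self_of_nhds.fderiv ▸ hmax.fderiv_eq_zero
  have hx := hmax.second_deriv_apply_nonpos 1 hψ (hψ' 1)
  have hy := hmax.second_deriv_apply_nonpos Complex.I hψ (hψ' Complex.I)
  have hgx := congr($hgrad 1)
  have hgy := congr($hgrad Complex.I)
  simp only [ℓ, ψ', add_apply, smul_apply,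
    zero_apply, Complex.reCLM_apply, Complex.one_re, Complex.I_re, smul_eq_mul,
    mul_one, mul_zero, zero_smul, smul_zero, add_zero] at hx hy hgx hgy
  have hdx : fderiv ℝ a z 1 = -(ε * (Real.exp (α * z.re) * α)) := by linarith
  rw [hdx, hgy] at heq
  have hpos := mul_pos (mul_pos (mul_pos hε hα) (Real.exp_pos (α * z.re))) (sub_pos.2 hβ₁)
  linarith

theorem stmt_17_general (U : Set ℂ) (hUopen : IsOpen U) (hUbdd : Bornology.IsBounded U)
    (b₁ b₂ : ℂ → ℝ)
    (hbbdd : ∃ C : ℝ, ∀ z ∈ U, |b₁ z| ≤ C ∧ |b₂ z| ≤ C)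
    (a : ℂ → ℝ)
    (hacont : ContinuousOn a (closure U)) (haC2 : ContDiffOn ℝ 2 a U)
    (heq : ∀ z ∈ U,
      fderiv ℝ (fun w => fderiv ℝ a w 1) z 1 +
        fderiv ℝ (fun w => fderiv ℝ a w Complex.I) z Complex.I
      = b₁ z * fderiv ℝ a z 1 + b₂ z * fderiv ℝ a z Complex.I) :
    ∀ z ∈ closure U, a z ≤ sSup (a '' frontier U) := by
  intro z hz
  obtain ⟨C, hC⟩ := hbbdd
  set α := max C 0 + 1
  have hα : 0 < α := by positivity
  have hb₁α : ∀ w ∈ U, b₁ w < α := fun w hw =>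
    lt_of_le_of_lt ((le_abs_self _).trans ((hC w hw).1.trans (le_max_left _ _))) (lt_add_one _)
  set e : ℂ → ℝ := fun w => Real.exp (α * w.re)
  have hecont : Continuous e := by fun_prop
  have hK : IsCompact (closure U) := hUbdd.isCompact_closure
  obtain ⟨M, hM⟩ := hK.bddAbove_image hecont.continuousOn
  have hM0 : 0 < M := (Real.exp_pos _).trans_le (hM ⟨z, hz, rfl⟩)
  have hbdd : BddAbove (a '' frontier U) :=
    (hK.of_isClosed_subset isClosed_frontier frontier_subset_closure).bddAbove_image
      (hacont.mono frontier_subset_closure)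
  have hfderiv : DifferentiableOn ℝ (fderiv ℝ a) U :=
    (haC2.fderiv_of_isOpen hUopen (by norm_num)).differentiableOn one_ne_zero
  have hnomax : ∀ ε > 0, ∀ w ∈ U, ¬ IsLocalMax (fun w => a w + ε * e w) w :=
    fun ε hε w hw => not_isLocalMax_add_mul_exp_re
      (haC2.differentiableOn two_ne_zero |>.eventually_differentiableAt (hUopen.mem_nhds hw))
      (hfderiv.differentiableAt (hUopen.mem_nhds hw)) (heq w hw) hα (hb₁α w hw) hε
  refine le_of_forall_pos_le_add fun δ hδ => ?_
  obtain ⟨w, hw, hwmax⟩ := exists_mem_frontier_isMaxOn_closure hUopen hK ⟨z, hz⟩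
    (hacont.add (continuous_const.mul hecont).continuousOn) (hnomax (δ / M) (by positivity))
  calc a z ≤ a z + δ / M * e z := le_add_of_nonneg_right (by positivity)
    _ ≤ a w + δ / M * e w := hwmax hz
    _ ≤ sSup (a '' frontier U) + δ / M * M := by
      gcongr
      · exact le_csSup hbdd ⟨w, hw, rfl⟩
      · exact hM ⟨w, frontier_subset_closure hw, rfl⟩
    _ = sSup (a '' frontier U) + δ := by field_simp

/-- Weak maximum principle for `Δa = b₁·∂a/∂x + b₂·∂a/∂y`.  Let `U ⊂ ℂ` be a bounded
open connected set, `b₁, b₂ : U → ℝ` continuous and bounded, and `a` continuous on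
`closure U` and C² on `U` satisfying the elliptic equation on `U` (here
`∂a/∂x = da(1)`, `∂a/∂y = da(i)`).  Then `a` attains its maximum over `closure U`
on the boundary `∂U`. -/
theorem stmt_17 (U : Set ℂ) (hUopen : IsOpen U) (hUbdd : Bornology.IsBounded U)
    (hUconn : IsConnected U)
    (b₁ b₂ : ℂ → ℝ)
    (hb₁cont : ContinuousOn b₁ U) (hb₂cont : ContinuousOn b₂ U)
    (hbbdd : ∃ C : ℝ, ∀ z ∈ U, |b₁ z| ≤ C ∧ |b₂ z| ≤ C)
    (a : ℂ → ℝ)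
    (hacont : ContinuousOn a (closure U)) (haC2 : ContDiffOn ℝ 2 a U)
    (heq : ∀ z ∈ U,
      fderiv ℝ (fun w => fderiv ℝ a w 1) z 1 +
        fderiv ℝ (fun w => fderiv ℝ a w Complex.I) z Complex.I
      = b₁ z * fderiv ℝ a z 1 + b₂ z * fderiv ℝ a z Complex.I) :
    ∀ z ∈ closure U, a z ≤ sSup (a '' frontier U) :=
  stmt_17_general U hUopen hUbdd b₁ b₂ hbbdd a hacont haC2 heq
end
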